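/- Let n ≥ 2, m ≥ 3, and let P be an m-th order, n-dimensional stochastic tensor on S = {1,…,n}. If a state i ∈ S is fully transient, i.e., f_{i i i3 … i_m} < 1 for all i3,…,i_m ∈ S, then Σ_{k=1}^{∞} p^{(k)}_{i i i3 … i_m} < ∞ for all i3,…,i_m ∈ S (the series of nonnegative terms converges for every tail). -/

import Mathlib

open Finset

/-- An `m`-th order, `n`-dimensional tensor with `m = r + 2`: the entry
`p_{i₁ i₂ … i_m}` is written `P i₁ t`, where `t = (i₂, …, i_m)` is the tail of
`m - 1 = r + 1` indices. -/
abbrev HOTensor (n r : ℕ) := Fin n → (Fin (r + 1) → Fin n) → ℝ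

/-- `P` is a stochastic tensor. -/
def IsStochasticT {n r : ℕ} (P : HOTensor n r) : Prop :=
  (∀ i t, 0 ≤ P i t ∧ P i t ≤ 1) ∧ ∀ t, ∑ i : Fin n, P i t = 1

/-- The product `A ⊠ B`:
`(A ⊠ B)_{i₁ i₂ … i_m} = Σ_j a_{i₁ j i₂ … i_{m-1}} b_{j i₂ … i_m}`. -/
def tmul {n r : ℕ} (A B : HOTensor n r) : HOTensor n r :=
  fun i t => ∑ j : Fin n, A i (Fin.cons j (Fin.init t)) * B j t

/-- Tensor powers: `tpow P k` is `P^k`, with entries the `k`-step transition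
probabilities `p^{(k)}_{i₁ … i_m}`; `P^0` is the identity tensor. -/
def tpow {n r : ℕ} (P : HOTensor n r) : ℕ → HOTensor n r
  | 0 => fun i t => if i = t 0 then 1 else 0
  | k + 1 => tmul (tpow P k) P

/-- `fpp P k` is the `(k+1)`-step first passage probability tensor `F^{[k+1]}`:
`f^{[1]} = p`, and `f^{[k+1]}_{i₁ i₂ … i_m} = Σ_{j ≠ i₁} f^{[k]}_{i₁ j i₂ … i_{m-1}} p_{j i₂ … i_m}`. -/
def fpp {n r : ℕ} (P : HOTensor n r) : ℕ → HOTensor n r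
  | 0 => P
  | k + 1 => fun i t =>
      ∑ j ∈ Finset.univ.filter (fun j => j ≠ i), fpp P k i (Fin.cons j (Fin.init t)) * P j t

/-- The ever-reaching probability `f_{i₁ i₂ … i_m} = Σ_{k=1}^∞ f^{[k]}_{i₁ i₂ … i_m}`. -/
noncomputable def everReach {n r : ℕ} (P : HOTensor n r) : HOTensor n r :=
  fun i t => ∑' k : ℕ, fpp P k i t

/-- State `j` is reachable from state `i` (`i → j`): for every choice of
`i₃, …, i_m` there is `k ≥ 0` with `p^{(k)}_{j i i₃ … i_m} > 0`. -/
def Reach {n r : ℕ} (P : HOTensor n r) (i j : Fin n) : Prop :=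
  ∀ u : Fin r → Fin n, ∃ k : ℕ, 0 < tpow P k j (Fin.cons i u)

/-- States `i` and `j` communicate (`i ↔ j`). -/
def Comm {n r : ℕ} (P : HOTensor n r) (i j : Fin n) : Prop :=
  Reach P i j ∧ Reach P j i

/-- State `i` is recurrent: `f_{i i i₃ … i_m} = 1` for all `i₃, …, i_m`. -/
def RecurrentState {n r : ℕ} (P : HOTensor n r) (i : Fin n) : Prop :=
  ∀ u : Fin r → Fin n, everReach P i (Fin.cons i u) = 1

/-- State `i` is fully transient: `f_{i i i₃ … i_m} < 1` for all `i₃, …, i_m`. -/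
def FullyTransientState {n r : ℕ} (P : HOTensor n r) (i : Fin n) : Prop :=
  ∀ u : Fin r → Fin n, everReach P i (Fin.cons i u) < 1

/-- `P` is ergodic: for all indices there is `k ≥ 1` with `p^{(k)}_{i₁ … i_m} > 0`. -/
def ErgodicT {n r : ℕ} (P : HOTensor n r) : Prop :=
  ∀ (i : Fin n) (t : Fin (r + 1) → Fin n), ∃ k : ℕ, 1 ≤ k ∧ 0 < tpow P k i t

/-- `P` is regular: some power `P^k`, `k ≥ 1`, has all entries positive. -/
def RegularT {n r : ℕ} (P : HOTensor n r) : Prop :=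
  ∃ k : ℕ, 1 ≤ k ∧ ∀ (i : Fin n) (t : Fin (r + 1) → Fin n), 0 < tpow P k i t

/-- The reduced transition matrix `Q` of `P`: rows and columns are indexed by
`(m-1)`-tuples; the entry in row `(i₁, …, i_{m-1})` and column `(j₁, …, j_{m-1})`
is `p_{i₁ i₂ … i_{m-1} j_{m-1}}` if `j_ℓ = i_{ℓ+1}` for `ℓ = 1, …, m-2`, else `0`. -/
def reducedT {n r : ℕ} (P : HOTensor n r) :
    Matrix (Fin (r + 1) → Fin n) (Fin (r + 1) → Fin n) ℝ :=
  fun u v =>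
    if ∀ ℓ : Fin r, v ℓ.castSucc = u ℓ.succ then
      P (u 0) (Fin.snoc (Fin.tail u) (v (Fin.last r)))
    else 0

/-! The tensor chain is a Markov chain on histories `t = (i₂, …, i_m)` that moves from `t` to
`(j, i₂, …, i_{m-1})` with probability `p_{j t}`: then `p^{(k)}_{i t}` is the probability that the
newest state of the history is `i` after `k` steps, i.e. that the chain is in `A = {h | h₀ = i}`,
and `f^{[l+1]}_{i t}` is the probability that it first enters `A` at step `l + 1`.
Splitting every visit to `A` at the first entry into `A` gives the renewal inequality
`s_N(t) ≤ (Σ_{l<N} f^{[l+1]}_{i t}) (1 + max_{h ∈ A} s_N(h))` for the partial sums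
`s_N(t) = Σ_{k<N} p^{(k+1)}_{i t}`. Taking `t ∈ A` maximizing `s_N` and
`θ = max_{h ∈ A} f_{i h} < 1` gives `s_N ≤ θ / (1 - θ)` on `A`, uniformly in `N`. -/

open Matrix

theorem add_pow_succ_eq_pow_succ_add_sum {R : Type*} [Semiring R] (b c : R) (k : ℕ) :
    (b + c) ^ (k + 1) = b ^ (k + 1) + ∑ l ∈ range (k + 1), b ^ l * c * (b + c) ^ (k - l) := by
  induction k with
  | zero => simp
  | succ k ih =>
    rw [pow_succ' _ (k + 1), add_mul]
    nth_rw 1 [ih]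
    rw [sum_range_succ' _ (k + 1), mul_add, mul_sum]
    simp only [Nat.add_sub_add_right, pow_succ', mul_assoc, pow_zero, one_mul, Nat.sub_zero]
    abel

namespace Matrix

variable {σ : Type*} [Fintype σ] [DecidableEq σ]

variable (σ) in
def nonnegMatrices : Submonoid (Matrix σ σ ℝ) where
  carrier := {M | ∀ i j, 0 ≤ M i j}
  mul_mem' hM hN i j := sum_nonneg fun k _ => mul_nonneg (hM i k) (hN k j)
  one_mem' i j := by by_cases h : i = j <;> simp [one_apply, h]

lemma rowStochastic_le_nonnegMatrices : rowStochastic ℝ σ ≤ nonnegMatrices σ :=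
  fun _ hM => hM.1

lemma mulVec_nonneg {M : Matrix σ σ ℝ} (hM : M ∈ nonnegMatrices σ) {w : σ → ℝ}
    (hw : ∀ h, 0 ≤ w h) (t : σ) : 0 ≤ (M *ᵥ w) t :=
  sum_nonneg fun h _ => mul_nonneg (hM t h) (hw h)

lemma mulVec_indicator_le {G : Matrix σ σ ℝ} (hG : G ∈ nonnegMatrices σ) {A : Set σ}
    {w : σ → ℝ} {C : ℝ} (hw : ∀ h ∈ A, w h ≤ C) (t : σ) :
    (G *ᵥ A.indicator w) t ≤ C * (G *ᵥ A.indicator 1) t := by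
  simp only [mulVec, dotProduct, mul_sum]
  refine sum_le_sum fun h _ => ?_
  by_cases hh : h ∈ A
  · simpa [hh, mul_comm C] using mul_le_mul_of_nonneg_left (hw h hh) (hG t h)
  · simp [hh]

variable (K : Matrix σ σ ℝ) (A : Set σ)

noncomputable def colRestrict : Matrix σ σ ℝ := K * diagonal (A.indicator 1)

lemma colRestrict_mulVec (w : σ → ℝ) : colRestrict K A *ᵥ w = K *ᵥ A.indicator w := by
  rw [colRestrict, ← mulVec_mulVec]
  congr 1
  ext h
  by_cases hh : h ∈ A <;> simp [mulVec_diagonal, hh]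

lemma colRestrict_compl_add_colRestrict : colRestrict K Aᶜ + colRestrict K A = K := by
  rw [colRestrict, colRestrict, ← mul_add, diagonal_add]
  simp [Set.indicator_compl_add_self_apply]

lemma colRestrict_mem_nonnegMatrices {K} (hK : K ∈ nonnegMatrices σ) :
    colRestrict K A ∈ nonnegMatrices σ := by
  refine mul_mem hK fun i j => ?_
  by_cases h : i = j <;> simp [h, Set.indicator_nonneg]

lemma colRestrict_compl_mulVec_indicator : colRestrict K Aᶜ *ᵥ A.indicator 1 = 0 := by
  rw [colRestrict_mulVec, Set.indicator_indicator, Set.compl_inter_self, Set.indicator_empty,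
    ← Pi.zero_def, mulVec_zero]

/-- The probability that the chain started at `t` first enters `A` at step `l + 1`. -/
noncomputable def firstPassage (l : ℕ) : σ → ℝ := colRestrict K Aᶜ ^ l *ᵥ (K *ᵥ A.indicator 1)

lemma firstPassage_zero : firstPassage K A 0 = K *ᵥ A.indicator 1 := by
  rw [firstPassage, pow_zero, one_mulVec]

lemma firstPassage_succ (l : ℕ) :
    firstPassage K A (l + 1) = colRestrict K Aᶜ *ᵥ firstPassage K A l := by
  rw [firstPassage, firstPassage, pow_succ', ← mulVec_mulVec]

/-- First-entry decomposition: the chain avoids `A` for `l` steps, enters `A` at step `l + 1`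
and is back in `A` after `k - l` further steps. -/
lemma pow_succ_mulVec_indicator (k : ℕ) :
    K ^ (k + 1) *ᵥ A.indicator 1 = ∑ l ∈ range (k + 1),
      (colRestrict K Aᶜ ^ l * K) *ᵥ A.indicator (K ^ (k - l) *ᵥ A.indicator 1) := by
  conv_lhs => rw [← colRestrict_compl_add_colRestrict K A, add_pow_succ_eq_pow_succ_add_sum,
    colRestrict_compl_add_colRestrict]
  rw [add_mulVec, pow_succ, ← mulVec_mulVec, colRestrict_compl_mulVec_indicator, mulVec_zero,
    zero_add, sum_mulVec]
  simp only [← mulVec_mulVec, colRestrict_mulVec]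

lemma sum_firstPassage_add_pow_mulVec_one (hK : K ∈ rowStochastic ℝ σ) (N : ℕ) :
    ∑ l ∈ range N, firstPassage K A l + colRestrict K Aᶜ ^ N *ᵥ 1 = 1 := by
  have hstep : K *ᵥ A.indicator 1 = 1 - colRestrict K Aᶜ *ᵥ 1 := by
    rw [colRestrict_mulVec, eq_sub_iff_add_eq, ← mulVec_add, Set.indicator_self_add_compl,
      hK.2]
  have hfirst (l : ℕ) : firstPassage K A l =
      colRestrict K Aᶜ ^ l *ᵥ 1 - colRestrict K Aᶜ ^ (l + 1) *ᵥ 1 := by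
    rw [firstPassage, hstep, mulVec_sub, mulVec_mulVec, pow_succ]
  simp only [hfirst, sum_range_sub', pow_zero, one_mulVec, sub_add_cancel]

variable {K}

lemma firstPassage_nonneg (hK : K ∈ nonnegMatrices σ) (l : ℕ) (t : σ) :
    0 ≤ firstPassage K A l t :=
  mulVec_nonneg (pow_mem (colRestrict_mem_nonnegMatrices Aᶜ hK) l)
    (mulVec_nonneg hK (Set.indicator_nonneg fun _ _ => zero_le_one)) t

lemma summable_firstPassage (hK : K ∈ rowStochastic ℝ σ) (t : σ) :
    Summable fun l => firstPassage K A l t := by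
  have hK' := rowStochastic_le_nonnegMatrices hK
  refine summable_of_sum_range_le (c := 1) (firstPassage_nonneg A hK' · t) fun N => ?_
  have h := congrFun (sum_firstPassage_add_pow_mulVec_one K A hK N) t
  simp only [Pi.add_apply, Finset.sum_apply, Pi.one_apply] at h
  have := mulVec_nonneg (w := 1) (pow_mem (colRestrict_mem_nonnegMatrices Aᶜ hK') N)
    (fun _ => zero_le_one) t
  linarith

lemma sum_pow_succ_mulVec_indicator_le (hK : K ∈ nonnegMatrices σ) {N : ℕ} {C : ℝ}
    (hC : ∀ h ∈ A, ∑ k ∈ range N, (K ^ (k + 1) *ᵥ A.indicator 1) h ≤ C) (t : σ) :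
    ∑ k ∈ range N, (K ^ (k + 1) *ᵥ A.indicator 1) t ≤
      (∑ l ∈ range N, firstPassage K A l t) * (1 + C) := by
  have hvisit (m : ℕ) : ∀ h, 0 ≤ (K ^ m *ᵥ A.indicator 1) h :=
    mulVec_nonneg (pow_mem hK m) (Set.indicator_nonneg fun _ _ => zero_le_one)
  have hgreen (l : ℕ) : ∀ h ∈ A, (∑ m ∈ range (N - l), K ^ m *ᵥ A.indicator 1) h ≤ 1 + C := by
    intro h hh
    rw [Finset.sum_apply]
    calc ∑ m ∈ range (N - l), (K ^ m *ᵥ A.indicator 1) h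
        ≤ ∑ m ∈ range (N + 1), (K ^ m *ᵥ A.indicator 1) h :=
          sum_le_sum_of_subset_of_nonneg (range_subset_range.2 (by omega))
            fun m _ _ => hvisit m h
      _ = ∑ k ∈ range N, (K ^ (k + 1) *ᵥ A.indicator 1) h + 1 := by
          simp [sum_range_succ', hh]
      _ ≤ 1 + C := by linarith [hC h hh]
  calc ∑ k ∈ range N, (K ^ (k + 1) *ᵥ A.indicator 1) t
      = ∑ k ∈ range N, ∑ l ∈ range (k + 1),
          ((colRestrict K Aᶜ ^ l * K) *ᵥ A.indicator (K ^ (k - l) *ᵥ A.indicator 1)) t := by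
        simp only [pow_succ_mulVec_indicator, Finset.sum_apply]
    _ = ∑ l ∈ range N, ∑ m ∈ range (N - l),
          ((colRestrict K Aᶜ ^ l * K) *ᵥ A.indicator (K ^ m *ᵥ A.indicator 1)) t :=
        sum_range_diag_flip N fun l m =>
          ((colRestrict K Aᶜ ^ l * K) *ᵥ A.indicator (K ^ m *ᵥ A.indicator 1)) t
    _ = ∑ l ∈ range N, ((colRestrict K Aᶜ ^ l * K) *ᵥ
          A.indicator (∑ m ∈ range (N - l), K ^ m *ᵥ A.indicator 1)) t := by
        simp only [Finset.indicator_sum, mulVec_sum, Finset.sum_apply]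
    _ ≤ ∑ l ∈ range N, (1 + C) * ((colRestrict K Aᶜ ^ l * K) *ᵥ A.indicator 1) t :=
        sum_le_sum fun l _ => mulVec_indicator_le
          (mul_mem (pow_mem (colRestrict_mem_nonnegMatrices Aᶜ hK) l) hK) (hgreen l) t
    _ = (∑ l ∈ range N, firstPassage K A l t) * (1 + C) := by
        rw [← mul_sum, mul_comm]
        simp only [firstPassage, mulVec_mulVec]

theorem summable_pow_succ_mulVec_indicator (hK : K ∈ rowStochastic ℝ σ)
    (hA : ∀ t ∈ A, ∑' l, firstPassage K A l t < 1) {t : σ} (ht : t ∈ A) :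
    Summable fun k => (K ^ (k + 1) *ᵥ A.indicator 1) t := by
  classical
  have hK' := rowStochastic_le_nonnegMatrices hK
  have hs : (univ.filter (· ∈ A)).Nonempty := ⟨t, by simpa using ht⟩
  obtain ⟨t₀, ht₀, hθ⟩ := exists_max_image _ (fun t => ∑' l, firstPassage K A l t) hs
  set θ := ∑' l, firstPassage K A l t₀
  have hθ₁ : θ < 1 := hA t₀ (by simpa using ht₀)
  have hreturn (N : ℕ) (h : σ) (hh : h ∈ A) : ∑ l ∈ range N, firstPassage K A l h ≤ θ :=
    (Summable.sum_le_tsum _ (fun l _ => firstPassage_nonneg A hK' l h)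
      (summable_firstPassage A hK h)).trans (hθ h (by simpa using hh))
  have hvisit (k : ℕ) (h : σ) : 0 ≤ (K ^ (k + 1) *ᵥ A.indicator 1) h :=
    mulVec_nonneg (pow_mem hK' _) (Set.indicator_nonneg fun _ _ => zero_le_one) h
  refine summable_of_sum_range_le (c := θ / (1 - θ)) (hvisit · t) fun N => ?_
  obtain ⟨t₁, ht₁, hS⟩ := exists_max_image _
    (fun t => ∑ k ∈ range N, (K ^ (k + 1) *ᵥ A.indicator 1) t) hs
  set S := ∑ k ∈ range N, (K ^ (k + 1) *ᵥ A.indicator 1) t₁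
  have hS₀ : 0 ≤ S := sum_nonneg fun k _ => hvisit k t₁
  have hrenewal : S ≤ θ * (1 + S) :=
    (sum_pow_succ_mulVec_indicator_le A hK' (fun h hh => hS h (by simpa using hh)) t₁).trans
      (mul_le_mul_of_nonneg_right (hreturn N t₁ (by simpa using ht₁)) (by linarith))
  calc ∑ k ∈ range N, (K ^ (k + 1) *ᵥ A.indicator 1) t ≤ S := hS t (by simpa using ht)
    _ ≤ θ / (1 - θ) := by rw [le_div_iff₀ (by linarith)]; linarith

end Matrix

section HOTensor

variable {n r : ℕ}

def historyKernel (P : HOTensor n r) :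
    Matrix (Fin (r + 1) → Fin n) (Fin (r + 1) → Fin n) ℝ :=
  Matrix.of fun t h => ∑ j, if h = Fin.cons j (Fin.init t) then P j t else 0

lemma historyKernel_mulVec (P : HOTensor n r) (w : (Fin (r + 1) → Fin n) → ℝ)
    (t : Fin (r + 1) → Fin n) :
    (historyKernel P *ᵥ w) t = ∑ j, P j t * w (Fin.cons j (Fin.init t)) := by
  simp only [mulVec, dotProduct, historyKernel, of_apply, sum_mul, ite_mul, zero_mul]
  rw [sum_comm]
  simp

lemma historyKernel_mem_rowStochastic {P : HOTensor n r} (hP : IsStochasticT P) :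
    historyKernel P ∈ rowStochastic ℝ _ := by
  refine ⟨fun t h => ?_, funext fun t => ?_⟩
  · rw [historyKernel, of_apply]
    exact sum_nonneg fun j _ => by split_ifs; exacts [(hP.1 j t).1, le_rfl]
  · simp [historyKernel_mulVec, hP.2 t]

lemma tpow_eq_pow_mulVec (P : HOTensor n r) (i : Fin n) (k : ℕ) :
    tpow P k i = historyKernel P ^ k *ᵥ {h | h 0 = i}.indicator 1 := by
  induction k with
  | zero =>
    funext t
    simp [tpow, Set.indicator_apply, eq_comm]
  | succ k ih =>
    funext t
    rw [pow_succ', ← mulVec_mulVec, historyKernel_mulVec, ← ih]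
    simp [tpow, tmul, mul_comm]

lemma fpp_eq_firstPassage (P : HOTensor n r) (i : Fin n) (l : ℕ) :
    fpp P l i = firstPassage (historyKernel P) {h | h 0 = i} l := by
  induction l with
  | zero =>
    funext t
    simp [fpp, firstPassage_zero, historyKernel_mulVec, Set.indicator_apply]
  | succ l ih =>
    funext t
    rw [firstPassage_succ, colRestrict_mulVec, historyKernel_mulVec, ← ih]
    simp [fpp, sum_filter, Set.indicator_apply, mul_comm]

end HOTensor

theorem fullyTransient_implies_convergence_general (n r : ℕ)
    (P : HOTensor n r) (hP : IsStochasticT P) (i : Fin n)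
    (htr : FullyTransientState P i) :
    ∀ u : Fin r → Fin n,
      Summable (fun k : ℕ => tpow P (k + 1) i (Fin.cons i u)) := by
  intro u
  have hreturn : ∀ t ∈ {h : Fin (r + 1) → Fin n | h 0 = i},
      ∑' l, firstPassage (historyKernel P) {h | h 0 = i} l t < 1 := by
    rintro t (ht : t 0 = i)
    rw [← Fin.cons_self_tail t, ht]
    simpa [everReach, fpp_eq_firstPassage] using htr (Fin.tail t)
  simpa only [tpow_eq_pow_mulVec] using
    summable_pow_succ_mulVec_indicator _ (historyKernel_mem_rowStochastic hP) hreturn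
      (t := Fin.cons i u) rfl

/-- if state `i` is fully transient then `Σ_{k≥1} p^{(k)}_{i i i₃ … i_m} < ∞`
for all `i₃, …, i_m` (the nonnegative series is summable). -/
theorem fullyTransient_implies_convergence (n r : ℕ) (hn : 2 ≤ n) (hr : 1 ≤ r)
    (P : HOTensor n r) (hP : IsStochasticT P) (i : Fin n)
    (htr : FullyTransientState P i) :
    ∀ u : Fin r → Fin n,
      Summable (fun k : ℕ => tpow P (k + 1) i (Fin.cons i u)) :=
  fullyTransient_implies_convergence_general n r P hP i htr
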